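/- (Main approximation result, standard complex structure.) Let u₁ and u₂ be C^∞ strictly plurisubharmonic functions on an open set U ⊆ ℂⁿ (i.e. H(u_j)(p,V) > 0 for every p ∈ U and every V ∈ ℂⁿ with V ≠ 0). Then for every ε > 0 and every open set Ω whose closure is compact and contained in U, there exists a function ũ that is C^∞ and strictly plurisubharmonic on Ω and satisfies max{u₁, u₂} ≤ ũ ≤ max{u₁, u₂} + ε pointwise on Ω. -/

import Mathlib

/-- The complex Hessian (Levi form) of `u` on the set `U` at `p` in direction `V`, for the
standard complex structure: `H(u)(p,V) = (1/4)(D²u(p)(V,V) + D²u(p)(iV,iV))`. -/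
noncomputable def leviForm {E : Type*} [NormedAddCommGroup E] [NormedSpace ℂ E]
    (u : E → ℝ) (U : Set E) (p V : E) : ℝ :=
  (1 / 4) * (iteratedFDerivWithin ℝ 2 u U p ![V, V] +
    iteratedFDerivWithin ℝ 2 u U p ![Complex.I • V, Complex.I • V])


private lemma leviForm_open_eq {E : Type*} [NormedAddCommGroup E] [NormedSpace ℂ E]
    (u : E → ℝ) {U : Set E} (hU : IsOpen U) {p : E} (hp : p ∈ U) (V : E) :
    leviForm u U p V = (1/4) * (fderiv ℝ (fderiv ℝ u) p V V
      + fderiv ℝ (fderiv ℝ u) p (Complex.I • V) (Complex.I • V)) := by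
  unfold leviForm
  rw [iteratedFDerivWithin_of_isOpen 2 hU hp, iteratedFDeriv_two_apply,
    iteratedFDeriv_two_apply]
  simp

private lemma hasDerivAt_psi (ε : ℝ) (hε : 0 < ε) (t : ℝ) :
    HasDerivAt (fun y : ℝ => Real.sqrt (y^2 + ε^2)) (t / Real.sqrt (t^2 + ε^2)) t := by
  have hq : 0 < t^2 + ε^2 := by positivity
  have hr : 0 < Real.sqrt (t^2 + ε^2) := Real.sqrt_pos.2 hq
  have h1 : HasDerivAt (fun y : ℝ => y^2 + ε^2) (2*t) t := by
    simpa using ((hasDerivAt_pow 2 t).add_const (ε^2))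
  have h2 := (Real.hasDerivAt_sqrt hq.ne').comp t h1
  refine HasDerivAt.congr_deriv h2 ?_
  field_simp

private lemma hasDerivAt_psi' (ε : ℝ) (hε : 0 < ε) (t : ℝ) :
    HasDerivAt (fun y : ℝ => y / Real.sqrt (y^2 + ε^2))
      (ε^2 / (Real.sqrt (t^2 + ε^2))^3) t := by
  have hq : 0 < t^2 + ε^2 := by positivity
  have hr : 0 < Real.sqrt (t^2 + ε^2) := Real.sqrt_pos.2 hq
  have hsq : Real.sqrt (t^2+ε^2) ^ 2 = t^2+ε^2 := Real.sq_sqrt hq.le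
  have h := (hasDerivAt_id t).div (hasDerivAt_psi ε hε t) hr.ne'
  refine HasDerivAt.congr_deriv h ?_
  field_simp
  simp only [id]; linear_combination hsq

private lemma hess_v_eq {E : Type*} [NormedAddCommGroup E] [NormedSpace ℝ E]
    {U : Set E} (hU : IsOpen U) {u₁ u₂ : E → ℝ}
    (h1 : ContDiffOn ℝ (⊤ : ℕ∞) u₁ U) (h2 : ContDiffOn ℝ (⊤ : ℕ∞) u₂ U)
    {ε : ℝ} (hε : 0 < ε) {p : E} (hp : p ∈ U) (V W : E) :
    fderiv ℝ (fderiv ℝ (fun x => (1/2:ℝ) * (u₁ x + u₂ x)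
        + (1/2:ℝ) * Real.sqrt ((u₁ x - u₂ x)^2 + ε^2))) p V W
      = (1/2) * (fderiv ℝ (fderiv ℝ u₁) p V W + fderiv ℝ (fderiv ℝ u₂) p V W)
        + (1/2) * ((u₁ p - u₂ p) / Real.sqrt ((u₁ p - u₂ p)^2 + ε^2))
            * (fderiv ℝ (fderiv ℝ u₁) p V W - fderiv ℝ (fderiv ℝ u₂) p V W)
        + (1/2) * (ε^2 / (Real.sqrt ((u₁ p - u₂ p)^2 + ε^2))^3)
            * ((fderiv ℝ u₁ p V - fderiv ℝ u₂ p V)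
                * (fderiv ℝ u₁ p W - fderiv ℝ u₂ p W)) := by
  set v : E → ℝ := fun x => (1/2:ℝ) * (u₁ x + u₂ x)
      + (1/2:ℝ) * Real.sqrt ((u₁ x - u₂ x)^2 + ε^2) with hv
  set D1 : E → (E →L[ℝ] ℝ) := fderiv ℝ u₁ with hD1
  set D2 : E → (E →L[ℝ] ℝ) := fderiv ℝ u₂ with hD2
  have key : ∀ x ∈ U, fderiv ℝ v x
      = (1/2:ℝ) • (D1 x + D2 x)
        + ((1/2) * ((u₁ x - u₂ x) / Real.sqrt ((u₁ x - u₂ x)^2 + ε^2)))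
            • (D1 x - D2 x) := by
    intro x hx
    have c1 : ContDiffAt ℝ (⊤ : ℕ∞) u₁ x := h1.contDiffAt (hU.mem_nhds hx)
    have c2 : ContDiffAt ℝ (⊤ : ℕ∞) u₂ x := h2.contDiffAt (hU.mem_nhds hx)
    have hd1 : HasFDerivAt u₁ (D1 x) x := (c1.differentiableAt (by simp)).hasFDerivAt
    have hd2 : HasFDerivAt u₂ (D2 x) x := (c2.differentiableAt (by simp)).hasFDerivAt
    have hw : HasFDerivAt (fun y => u₁ y - u₂ y) (D1 x - D2 x) x := hd1.sub hd2
    have hs : HasFDerivAt (fun y => Real.sqrt ((u₁ y - u₂ y)^2 + ε^2))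
        (((u₁ x - u₂ x) / Real.sqrt ((u₁ x - u₂ x)^2 + ε^2)) • (D1 x - D2 x)) x :=
      (hasDerivAt_psi ε hε (u₁ x - u₂ x)).comp_hasFDerivAt (f := fun y => u₁ y - u₂ y) x hw
    have htot := ((hd1.add hd2).const_mul (1/2:ℝ)).add (hs.const_mul (1/2:ℝ))
    have : HasFDerivAt v ((1/2:ℝ) • (D1 x + D2 x)
        + ((1/2) * ((u₁ x - u₂ x) / Real.sqrt ((u₁ x - u₂ x)^2 + ε^2)))
            • (D1 x - D2 x)) x := by
      rw [mul_smul]; exact htot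
    exact this.fderiv
  have hfd : fderiv ℝ v =ᶠ[nhds p] (fun x => (1/2:ℝ) • (D1 x + D2 x)
        + ((1/2) * ((u₁ x - u₂ x) / Real.sqrt ((u₁ x - u₂ x)^2 + ε^2)))
            • (D1 x - D2 x)) :=
    Filter.eventuallyEq_of_mem (hU.mem_nhds hp) key
  have c1 : ContDiffAt ℝ (⊤ : ℕ∞) u₁ p := h1.contDiffAt (hU.mem_nhds hp)
  have c2 : ContDiffAt ℝ (⊤ : ℕ∞) u₂ p := h2.contDiffAt (hU.mem_nhds hp)
  have hd1 : HasFDerivAt u₁ (D1 p) p := (c1.differentiableAt (by simp)).hasFDerivAt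
  have hd2 : HasFDerivAt u₂ (D2 p) p := (c2.differentiableAt (by simp)).hasFDerivAt
  have hD1d : HasFDerivAt D1 (fderiv ℝ D1 p) p :=
    (((c1.fderiv_right (m := 1) (by exact WithTop.coe_le_coe.mpr le_top)).differentiableAt one_ne_zero).hasFDerivAt)
  have hD2d : HasFDerivAt D2 (fderiv ℝ D2 p) p :=
    (((c2.fderiv_right (m := 1) (by exact WithTop.coe_le_coe.mpr le_top)).differentiableAt one_ne_zero).hasFDerivAt)
  have hw : HasFDerivAt (fun y => u₁ y - u₂ y) (D1 p - D2 p) p := hd1.sub hd2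
  have hc0 : HasFDerivAt
      (fun x => (u₁ x - u₂ x) / Real.sqrt ((u₁ x - u₂ x)^2 + ε^2))
      ((ε^2 / (Real.sqrt ((u₁ p - u₂ p)^2 + ε^2))^3) • (D1 p - D2 p)) p :=
    (hasDerivAt_psi' ε hε (u₁ p - u₂ p)).comp_hasFDerivAt (f := fun y => u₁ y - u₂ y) p hw
  have hc := hc0.const_mul (1/2:ℝ)
  have hf : HasFDerivAt (fun x => D1 x - D2 x)
      (fderiv ℝ D1 p - fderiv ℝ D2 p) p := hD1d.sub hD2d
  have hA : HasFDerivAt (fun x => (1/2:ℝ) • (D1 x + D2 x))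
      ((1/2:ℝ) • (fderiv ℝ D1 p + fderiv ℝ D2 p)) p :=
    (hD1d.add hD2d).const_smul (1/2:ℝ)
  have hG := hA.add (hc.smul hf)
  have hvd := hG.congr_of_eventuallyEq hfd
  rw [hvd.fderiv]
  simp only [ContinuousLinearMap.add_apply, ContinuousLinearMap.smul_apply,
    ContinuousLinearMap.sub_apply, ContinuousLinearMap.coe_smul',
    ContinuousLinearMap.smulRight_apply, Pi.smul_apply, smul_eq_mul]
  ring

theorem strictly_psh_max_approx (n : ℕ)
    (U : Set (EuclideanSpace ℂ (Fin n))) (hU : IsOpen U)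
    (u₁ u₂ : EuclideanSpace ℂ (Fin n) → ℝ)
    (hu₁_smooth : ContDiffOn ℝ (⊤ : ℕ∞) u₁ U) (hu₂_smooth : ContDiffOn ℝ (⊤ : ℕ∞) u₂ U)
    (hu₁_spsh : ∀ p ∈ U, ∀ V : EuclideanSpace ℂ (Fin n), V ≠ 0 → 0 < leviForm u₁ U p V)
    (hu₂_spsh : ∀ p ∈ U, ∀ V : EuclideanSpace ℂ (Fin n), V ≠ 0 → 0 < leviForm u₂ U p V)
    (ε : ℝ) (hε : 0 < ε)
    (Ω : Set (EuclideanSpace ℂ (Fin n))) (hΩ : IsOpen Ω)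
    (hΩ_compact : IsCompact (closure Ω)) (hΩ_sub : closure Ω ⊆ U) :
    ∃ v : EuclideanSpace ℂ (Fin n) → ℝ,
      ContDiffOn ℝ (⊤ : ℕ∞) v Ω ∧
      (∀ p ∈ Ω, ∀ V : EuclideanSpace ℂ (Fin n), V ≠ 0 → 0 < leviForm v Ω p V) ∧
      (∀ p ∈ Ω, max (u₁ p) (u₂ p) ≤ v p ∧ v p ≤ max (u₁ p) (u₂ p) + ε) := by
  refine ⟨fun x => (1/2:ℝ) * (u₁ x + u₂ x)
      + (1/2:ℝ) * Real.sqrt ((u₁ x - u₂ x)^2 + ε^2), ?_, ?_, ?_⟩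
  · -- smoothness
    intro p hp
    have hpU : p ∈ U := hΩ_sub (subset_closure hp)
    have c1 : ContDiffAt ℝ (⊤ : ℕ∞) u₁ p := hu₁_smooth.contDiffAt (hU.mem_nhds hpU)
    have c2 : ContDiffAt ℝ (⊤ : ℕ∞) u₂ p := hu₂_smooth.contDiffAt (hU.mem_nhds hpU)
    have hpos : (u₁ p - u₂ p)^2 + ε^2 ≠ 0 := by positivity
    have harg : ContDiffAt ℝ (⊤ : ℕ∞) (fun x => (u₁ x - u₂ x)^2 + ε^2) p :=
      ((c1.sub c2).pow 2).add contDiffAt_const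
    exact ((contDiffAt_const.mul (c1.add c2)).add
      (contDiffAt_const.mul (harg.sqrt hpos))).contDiffWithinAt
  · -- strict plurisubharmonicity
    intro p hp V hV
    have hpU : p ∈ U := hΩ_sub (subset_closure hp)
    have H1 := hu₁_spsh p hpU V hV
    have H2 := hu₂_spsh p hpU V hV
    rw [leviForm_open_eq _ hU hpU] at H1 H2
    rw [leviForm_open_eq _ hΩ hp,
      hess_v_eq hU hu₁_smooth hu₂_smooth hε hpU,
      hess_v_eq hU hu₁_smooth hu₂_smooth hε hpU]
    set a := u₁ p - u₂ p with ha
    set r := Real.sqrt (a^2 + ε^2) with hrdef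
    have hq : 0 < a^2 + ε^2 := by positivity
    have hrpos : 0 < r := Real.sqrt_pos.2 hq
    have hr2 : r^2 = a^2 + ε^2 := Real.sq_sqrt hq.le
    have hlt : a < r := by nlinarith
    have hgt : -r < a := by nlinarith
    set c := a / r with hc
    set d := ε^2 / r^3 with hd
    have hc1 : -1 < c := by rw [hc]; rw [lt_div_iff₀ hrpos]; linarith
    have hc2 : c < 1 := by rw [hc]; rw [div_lt_iff₀ hrpos]; linarith
    have hdpos : 0 < d := by rw [hd]; positivity
    set dV := fderiv ℝ u₁ p V - fderiv ℝ u₂ p V with hdV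
    set dW := fderiv ℝ u₁ p (Complex.I • V) - fderiv ℝ u₂ p (Complex.I • V) with hdW
    set A1 := fderiv ℝ (fderiv ℝ u₁) p V V with hA1
    set A2 := fderiv ℝ (fderiv ℝ u₂) p V V with hA2
    set B1 := fderiv ℝ (fderiv ℝ u₁) p (Complex.I • V) (Complex.I • V) with hB1
    set B2 := fderiv ℝ (fderiv ℝ u₂) p (Complex.I • V) (Complex.I • V) with hB2
    nlinarith [mul_pos (show (0:ℝ) < 1 + c by linarith) H1,
      mul_pos (show (0:ℝ) < 1 - c by linarith) H2,
      mul_nonneg hdpos.le (add_nonneg (mul_self_nonneg dV) (mul_self_nonneg dW))]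
  · -- bounds
    intro p hp
    have habs : |u₁ p - u₂ p| ≤ Real.sqrt ((u₁ p - u₂ p)^2 + ε^2) := by
      rw [← Real.sqrt_sq_eq_abs]
      exact Real.sqrt_le_sqrt (by nlinarith [sq_nonneg ε])
    have hub : Real.sqrt ((u₁ p - u₂ p)^2 + ε^2) ≤ |u₁ p - u₂ p| + ε := by
      rw [← Real.sqrt_sq (by positivity : (0:ℝ) ≤ |u₁ p - u₂ p| + ε)]
      apply Real.sqrt_le_sqrt
      nlinarith [abs_nonneg (u₁ p - u₂ p), sq_abs (u₁ p - u₂ p)]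
    constructor
    · rcases le_total (u₁ p) (u₂ p) with h | h
      · rw [max_eq_right h]; rw [abs_of_nonpos (by linarith)] at habs; linarith
      · rw [max_eq_left h]; rw [abs_of_nonneg (by linarith)] at habs; linarith
    · rcases le_total (u₁ p) (u₂ p) with h | h
      · rw [max_eq_right h]; rw [abs_of_nonpos (by linarith)] at hub; linarith
      · rw [max_eq_left h]; rw [abs_of_nonneg (by linarith)] at hub; linarith
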